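/- Let m ≥ 0 and k ≥ 0 be integers. Then S_k(m) := ∑_{k1+k2=k, k1,k2 ≥ 0} (1/(k1! · k2!)) · Γ(m+3/2)² / (Γ(m+k1+3/2) · Γ(m+k2+3/2)) satisfies S_k(m) ≤ 2^k / (k! · (m+3/2)^k). -/

import Mathlib

open Real

/-- `S_k(m)` from the paper:
`∑_{k₁+k₂=k} (1/(k₁! k₂!)) Γ(m+3/2)² / (Γ(m+k₁+3/2) Γ(m+k₂+3/2))`. -/
noncomputable def S (k m : ℕ) : ℝ :=
  ∑ p ∈ Finset.HasAntidiagonal.antidiagonal k,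
    (1 / ((Nat.factorial p.1 : ℝ) * (Nat.factorial p.2 : ℝ))) *
      (Real.Gamma ((m : ℝ) + 3 / 2) ^ 2 /
        (Real.Gamma ((m : ℝ) + (p.1 : ℝ) + 3 / 2) * Real.Gamma ((m : ℝ) + (p.2 : ℝ) + 3 / 2)))

/-! Since `Γ(x + j) = x (x + 1) ⋯ (x + j - 1) Γ(x) ≥ x ^ j Γ(x)`, each Gamma ratio in `S_k(m)` is at
most `(m + 3/2)⁻ᵏ`, and what remains is `∑_{k₁+k₂=k} 1 / (k₁! k₂!) = 2ᵏ / k!`. -/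

open Finset Nat

lemma pow_mul_Gamma_le_Gamma_add_nat {x : ℝ} (hx : 0 < x) (j : ℕ) :
    x ^ j * Gamma x ≤ Gamma (x + j) := by
  induction j with
  | zero => simp
  | succ j ih =>
    have hxj : 0 < x + j := by positivity
    calc x ^ (j + 1) * Gamma x = x * (x ^ j * Gamma x) := by ring
      _ ≤ (x + j) * Gamma (x + j) := by gcongr; linarith [j.cast_nonneg (α := ℝ)]
      _ = Gamma (x + ↑(j + 1)) := by rw [cast_succ, ← add_assoc, Gamma_add_one hxj.ne']

lemma Gamma_sq_div_Gamma_add_mul_Gamma_add_le {x : ℝ} (hx : 0 < x) (i j : ℕ) :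
    Gamma x ^ 2 / (Gamma (x + i) * Gamma (x + j)) ≤ 1 / x ^ (i + j) := by
  have hi := Gamma_pos_of_pos (show 0 < x + i by positivity)
  have hj := Gamma_pos_of_pos (show 0 < x + j by positivity)
  rw [div_le_div_iff₀ (by positivity) (by positivity), one_mul]
  calc Gamma x ^ 2 * x ^ (i + j) = (x ^ i * Gamma x) * (x ^ j * Gamma x) := by ring
    _ ≤ Gamma (x + i) * Gamma (x + j) := by
      gcongr <;> exact pow_mul_Gamma_le_Gamma_add_nat hx _

lemma sum_antidiagonal_one_div_factorial_mul_factorial (k : ℕ) :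
    ∑ p ∈ antidiagonal k, 1 / ((p.1 ! : ℝ) * p.2 !) = 2 ^ k / k ! := by
  calc ∑ p ∈ antidiagonal k, 1 / ((p.1 ! : ℝ) * p.2 !)
      = ∑ p ∈ antidiagonal k, (k.choose p.1 : ℝ) / k ! := by
        refine sum_congr rfl fun p hp => ?_
        rw [← mem_antidiagonal.1 hp, choose_symm_add, div_eq_div_iff (by positivity) (by positivity),
          ← add_choose_mul_factorial_mul_factorial]
        push_cast
        ring
    _ = 2 ^ k / k ! := by
      rw [← sum_div, Nat.sum_antidiagonal_eq_sum_range_succ_mk]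
      congr 1
      exact_mod_cast sum_range_choose k

theorem S_le (m k : ℕ) :
    S k m ≤ 2 ^ k / ((Nat.factorial k : ℝ) * ((m : ℝ) + 3 / 2) ^ k) := by
  unfold S
  set x : ℝ := m + 3 / 2
  have hx : 0 < x := by positivity
  calc _ ≤ ∑ p ∈ antidiagonal k, 1 / ((p.1 ! : ℝ) * p.2 !) * (1 / x ^ k) := by
        refine sum_le_sum fun p hp => ?_
        rw [← mem_antidiagonal.1 hp, add_right_comm _ (p.1 : ℝ), add_right_comm _ (p.2 : ℝ)]
        exact mul_le_mul_of_nonneg_left (Gamma_sq_div_Gamma_add_mul_Gamma_add_le hx p.1 p.2)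
          (by positivity)
    _ = 2 ^ k / (k ! * x ^ k) := by
      rw [← sum_mul, sum_antidiagonal_one_div_factorial_mul_factorial, _root_.div_mul_div_comm, mul_one]
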